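/- Fix k ≥ 1, ρ ∈ (0,1)^k with Σ_r ρ_r = 1, a symmetric matrix P ∈ (0,1)^{k×k}, and indices i ≠ j in [k] such that P_{ri} ≠ P_{rj} for at least one r ∈ [k]. Let ξ* ∈ (0,1) be a maximizer of ξ ↦ CH_ξ(θ_i, θ_j) over [0,1], and let x* = ( ρ_r P_{ri}^{ξ*} P_{rj}^{1−ξ*}, ρ_r (1−P_{ri})^{ξ*}(1−P_{rj})^{1−ξ*} )_{r∈[k]} ∈ ℝ^{2k}. Then η_i(x*) = η_j(x*) = Δ_+(θ_i, θ_j). In particular, if t_0 = 1/Δ_+(θ_i, θ_j), then x* ∈ DR_{1/t_0}(i) ∩ DR_{1/t_0}(j). -/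

import Mathlib

/-- The dissonance of `x` relative to community `i` (coordinate `(r,false)` is `x_{1,r}`,
coordinate `(r,true)` is `x_{2,r}`; `0 * Real.log (0 / c) = 0` in Lean, matching the
convention that a term vanishes when the corresponding coordinate is `0`). -/
noncomputable def eta {k : ℕ} (ρ : Fin k → ℝ) (P : Matrix (Fin k) (Fin k) ℝ)
    (i : Fin k) (x : EuclideanSpace ℝ (Fin k × Bool)) : ℝ :=
  (∑ r : Fin k,
    (x (r, false) * Real.log (x (r, false) / (Real.exp 1 * ρ r * P r i))
      + x (r, true) * Real.log (x (r, true) / (Real.exp 1 * ρ r * (1 - P r i))))) + 1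

/-- The δ-dissonance range relative to community `i`. -/
noncomputable def DR {k : ℕ} (ρ : Fin k → ℝ) (P : Matrix (Fin k) (Fin k) ℝ)
    (i : Fin k) (δ : ℝ) : Set (EuclideanSpace ℝ (Fin k × Bool)) :=
  {x | (∀ p, 0 ≤ x p) ∧ eta ρ P i x ≤ δ}

/-- `CH_ξ(μ, ν) = ∑_i [ξ μ_i + (1-ξ) ν_i − μ_i^ξ ν_i^{1-ξ}]`. -/
noncomputable def CH {ι : Type*} [Fintype ι] (ξ : ℝ) (μ ν : ι → ℝ) : ℝ :=
  ∑ i, (ξ * μ i + (1 - ξ) * ν i - μ i ^ ξ * ν i ^ (1 - ξ))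

/-- The Chernoff–Hellinger divergence `Δ_+(μ,ν) = max_{ξ ∈ [0,1]} CH_ξ(μ,ν)`. -/
noncomputable def DeltaPlus {ι : Type*} [Fintype ι] (μ ν : ι → ℝ) : ℝ :=
  sSup ((fun ξ => CH ξ μ ν) '' Set.Icc (0 : ℝ) 1)

/-- `θ_i = (ρ_r P_{ri}, ρ_r (1 − P_{ri}))_{r ∈ [k]}`. -/
noncomputable def theta {k : ℕ} (ρ : Fin k → ℝ) (P : Matrix (Fin k) (Fin k) ℝ)
    (i : Fin k) : Fin k × Bool → ℝ :=
  fun p => if p.2 then ρ p.1 * (1 - P p.1 i) else ρ p.1 * P p.1 i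

/-- `x* = (ρ_r P_{ri}^{ξ} P_{rj}^{1−ξ}, ρ_r (1−P_{ri})^{ξ} (1−P_{rj})^{1−ξ})_{r ∈ [k]}`. -/
noncomputable def xstar {k : ℕ} (ρ : Fin k → ℝ) (P : Matrix (Fin k) (Fin k) ℝ)
    (i j : Fin k) (ξ : ℝ) : EuclideanSpace ℝ (Fin k × Bool) :=
  (WithLp.equiv 2 (Fin k × Bool → ℝ)).symm fun p =>
    if p.2 then ρ p.1 * ((1 - P p.1 i) ^ ξ * (1 - P p.1 j) ^ (1 - ξ))
    else ρ p.1 * (P p.1 i ^ ξ * P p.1 j ^ (1 - ξ))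


/-!
The dissonance `η_l(x) = ∑_p θ_l(p) klFun (x_p / θ_l(p))` is the generalized Kullback–Leibler
divergence of `x` from `θ_l`, and `x*` is the geometric mixture `θ_i^ξ θ_j^(1-ξ)`. Since
`log (x*/θ_i) = (1 - ξ) log (θ_j/θ_i)`, the divergence of `x*` from `θ_i` equals `CH_ξ(θ_i, θ_j)`
plus `1 - ξ` times the derivative of `t ↦ CH_t(θ_i, θ_j)` at `ξ`, which vanishes at an interior
maximizer. The identity `CH_ξ(μ, ν) = CH_{1-ξ}(ν, μ)` exchanges the roles of `i` and `j`.
-/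

open Real InformationTheory

section GeometricMixture

variable {ι : Type*} [Fintype ι] {μ ν : ι → ℝ}

lemma hasDerivAt_rpow_mul_rpow_one_sub {a b : ℝ} (ha : 0 < a) (hb : 0 < b) (ξ : ℝ) :
    HasDerivAt (fun t : ℝ => a ^ t * b ^ (1 - t)) (a ^ ξ * b ^ (1 - ξ) * (log a - log b)) ξ := by
  have hb' : HasDerivAt (fun t : ℝ => b ^ (1 - t)) (b ^ (1 - ξ) * log b * (-1)) ξ :=
    (hasStrictDerivAt_const_rpow hb (1 - ξ)).hasDerivAt.comp ξ ((hasDerivAt_id ξ).const_sub 1)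
  exact ((hasStrictDerivAt_const_rpow ha ξ).hasDerivAt.mul hb').congr_deriv (by ring)

lemma hasDerivAt_CH (hμ : ∀ p, 0 < μ p) (hν : ∀ p, 0 < ν p) (ξ : ℝ) :
    HasDerivAt (fun t => CH t μ ν)
      (∑ p, (μ p - ν p - μ p ^ ξ * ν p ^ (1 - ξ) * (log (μ p) - log (ν p)))) ξ := by
  refine HasDerivAt.fun_sum fun p _ => ?_
  have hlin : HasDerivAt (fun t : ℝ => t * μ p + (1 - t) * ν p) (μ p - ν p) ξ :=
    ((hasDerivAt_mul_const (μ p)).add (((hasDerivAt_id ξ).const_sub 1).mul_const (ν p))).congr_deriv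
      (by ring)
  exact hlin.sub (hasDerivAt_rpow_mul_rpow_one_sub (hμ p) (hν p) ξ)

lemma CH_one_sub (ξ : ℝ) (μ ν : ι → ℝ) : CH (1 - ξ) ν μ = CH ξ μ ν := by
  unfold CH
  refine Finset.sum_congr rfl fun p _ => ?_
  rw [sub_sub_cancel]
  ring

lemma mul_klFun_div (x : ℝ) {m : ℝ} (hm : m ≠ 0) :
    m * klFun (x / m) = x * log (x / m) + m - x := by
  rw [klFun_apply]
  field_simp

lemma sum_mul_klFun_geomMixture_eq_CH (hμ : ∀ p, 0 < μ p) (hν : ∀ p, 0 < ν p) {ξ : ℝ}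
    (hcrit : HasDerivAt (fun t => CH t μ ν) 0 ξ) :
    ∑ p, μ p * klFun (μ p ^ ξ * ν p ^ (1 - ξ) / μ p) = CH ξ μ ν := by
  have hzero := (hasDerivAt_CH hμ hν ξ).unique hcrit
  have hlog : ∀ p, log (μ p ^ ξ * ν p ^ (1 - ξ) / μ p) = -(1 - ξ) * (log (μ p) - log (ν p)) := by
    intro p
    have hμξ := rpow_pos_of_pos (hμ p) ξ
    have hνξ := rpow_pos_of_pos (hν p) (1 - ξ)
    rw [log_div (mul_pos hμξ hνξ).ne' (hμ p).ne', log_mul hμξ.ne' hνξ.ne',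
      log_rpow (hμ p), log_rpow (hν p)]
    ring
  calc ∑ p, μ p * klFun (μ p ^ ξ * ν p ^ (1 - ξ) / μ p)
      = ∑ p, ((1 - ξ) * (μ p - ν p - μ p ^ ξ * ν p ^ (1 - ξ) * (log (μ p) - log (ν p)))
          + (ξ * μ p + (1 - ξ) * ν p - μ p ^ ξ * ν p ^ (1 - ξ))) := by
        refine Finset.sum_congr rfl fun p _ => ?_
        rw [mul_klFun_div _ (hμ p).ne', hlog]
        ring
    _ = CH ξ μ ν := by
        rw [Finset.sum_add_distrib, ← Finset.mul_sum, hzero, mul_zero, zero_add, CH]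

theorem sum_mul_klFun_geomMixture_eq_DeltaPlus (hμ : ∀ p, 0 < μ p) (hν : ∀ p, 0 < ν p)
    {ξ : ℝ} (hξ : ξ ∈ Set.Ioo (0 : ℝ) 1)
    (hmax : IsMaxOn (fun t => CH t μ ν) (Set.Icc 0 1) ξ) :
    ∑ p, μ p * klFun (μ p ^ ξ * ν p ^ (1 - ξ) / μ p) = DeltaPlus μ ν ∧
      ∑ p, ν p * klFun (μ p ^ ξ * ν p ^ (1 - ξ) / ν p) = DeltaPlus μ ν := by
  have hDelta : DeltaPlus μ ν = CH ξ μ ν :=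
    IsGreatest.csSup_eq ⟨Set.mem_image_of_mem _ (Set.Ioo_subset_Icc_self hξ),
      Set.forall_mem_image.2 hmax⟩
  have hderiv := hasDerivAt_CH hμ hν ξ
  have hcrit : HasDerivAt (fun t => CH t μ ν) 0 ξ :=
    (hmax.isLocalMax (Icc_mem_nhds hξ.1 hξ.2)).hasDerivAt_eq_zero hderiv ▸ hderiv
  have hcrit' : HasDerivAt (fun t => CH t ν μ) 0 (1 - ξ) := by
    have := HasDerivAt.comp_const_sub (f := fun t => CH t μ ν) 1 (1 - ξ)
      (by rwa [sub_sub_cancel])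
    simpa only [CH_one_sub, neg_zero] using this
  refine ⟨hDelta ▸ sum_mul_klFun_geomMixture_eq_CH hμ hν hcrit, ?_⟩
  rw [hDelta, ← CH_one_sub, ← sum_mul_klFun_geomMixture_eq_CH hν hμ hcrit']
  simp only [sub_sub_cancel, mul_comm]

end GeometricMixture

section Communities

variable {k : ℕ} {ρ : Fin k → ℝ} {P : Matrix (Fin k) (Fin k) ℝ}

lemma theta_pos (hρ : ∀ r, 0 < ρ r) (hP : ∀ r s, P r s ∈ Set.Ioo (0 : ℝ) 1) (l : Fin k)
    (p : Fin k × Bool) : 0 < theta ρ P l p := by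
  obtain ⟨r, _ | _⟩ := p
  · exact mul_pos (hρ r) (hP r l).1
  · exact mul_pos (hρ r) (sub_pos.2 (hP r l).2)

lemma sum_theta (hρsum : ∑ r, ρ r = 1) (l : Fin k) : ∑ p, theta ρ P l p = 1 := by
  rw [Fintype.sum_prod_type, ← hρsum]
  refine Finset.sum_congr rfl fun r _ => ?_
  simp only [Fintype.sum_bool, theta, if_true, Bool.false_eq_true, if_false]
  ring

lemma xstar_apply (hρ : ∀ r, 0 ≤ ρ r) (hP : ∀ r s, P r s ∈ Set.Icc (0 : ℝ) 1) (i j : Fin k)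
    (ξ : ℝ) (p : Fin k × Bool) :
    xstar ρ P i j ξ p = theta ρ P i p ^ ξ * theta ρ P j p ^ (1 - ξ) := by
  have hρ1 : ρ p.1 ^ ξ * ρ p.1 ^ (1 - ξ) = ρ p.1 := by
    rw [← rpow_add' (hρ p.1) (by norm_num), add_sub_cancel, rpow_one]
  obtain ⟨r, _ | _⟩ := p
  · change ρ r * (P r i ^ ξ * P r j ^ (1 - ξ)) = (ρ r * P r i) ^ ξ * (ρ r * P r j) ^ (1 - ξ)
    rw [mul_rpow (hρ r) (hP r i).1, mul_rpow (hρ r) (hP r j).1, mul_mul_mul_comm, hρ1]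
  · change ρ r * ((1 - P r i) ^ ξ * (1 - P r j) ^ (1 - ξ))
      = (ρ r * (1 - P r i)) ^ ξ * (ρ r * (1 - P r j)) ^ (1 - ξ)
    rw [mul_rpow (hρ r) (sub_nonneg.2 (hP r i).2), mul_rpow (hρ r) (sub_nonneg.2 (hP r j).2),
      mul_mul_mul_comm, hρ1]

lemma eta_eq_sum_mul_klFun (hρ : ∀ r, 0 < ρ r) (hρsum : ∑ r, ρ r = 1)
    (hP : ∀ r s, P r s ∈ Set.Ioo (0 : ℝ) 1) (l : Fin k) (x : EuclideanSpace ℝ (Fin k × Bool)) :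
    eta ρ P l x = ∑ p, theta ρ P l p * klFun (x p / theta ρ P l p) := by
  have hterm : ∀ p, theta ρ P l p * klFun (x p / theta ρ P l p)
      = x p * log (x p / (exp 1 * theta ρ P l p)) + theta ρ P l p := by
    intro p
    have hθ := (theta_pos hρ hP l p).ne'
    rw [mul_klFun_div _ hθ]
    rcases eq_or_ne (x p) 0 with hx | hx
    · simp [hx]
    · rw [mul_comm (exp 1), ← div_div, log_div (div_ne_zero hx hθ) (exp_ne_zero 1), log_exp]
      ring
  rw [Finset.sum_congr rfl fun p _ => hterm p, Finset.sum_add_distrib, sum_theta hρsum, eta,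
    Fintype.sum_prod_type]
  congr 1
  refine Finset.sum_congr rfl fun r _ => ?_
  simp only [Fintype.sum_bool, theta, if_true, Bool.false_eq_true, if_false, mul_assoc]
  ring

end Communities

theorem stmt4_general (k : ℕ) (ρ : Fin k → ℝ)
    (hρ : ∀ r, ρ r ∈ Set.Ioo (0 : ℝ) 1) (hρsum : ∑ r, ρ r = 1)
    (P : Matrix (Fin k) (Fin k) ℝ)
    (hP : ∀ r s, P r s ∈ Set.Ioo (0 : ℝ) 1)
    (i j : Fin k)
    (ξstar : ℝ) (hξ : ξstar ∈ Set.Ioo (0 : ℝ) 1)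
    (hmax : ∀ ξ ∈ Set.Icc (0 : ℝ) 1,
      CH ξ (theta ρ P i) (theta ρ P j) ≤ CH ξstar (theta ρ P i) (theta ρ P j))
    (t0 : ℝ) (ht0 : t0 = 1 / DeltaPlus (theta ρ P i) (theta ρ P j)) :
    eta ρ P i (xstar ρ P i j ξstar) = DeltaPlus (theta ρ P i) (theta ρ P j) ∧
    eta ρ P j (xstar ρ P i j ξstar) = DeltaPlus (theta ρ P i) (theta ρ P j) ∧
    xstar ρ P i j ξstar ∈ DR ρ P i (1 / t0) ∩ DR ρ P j (1 / t0) := by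
  have hρpos : ∀ r, 0 < ρ r := fun r => (hρ r).1
  have hθ := theta_pos hρpos hP
  have hx : ∀ p, xstar ρ P i j ξstar p = theta ρ P i p ^ ξstar * theta ρ P j p ^ (1 - ξstar) :=
    xstar_apply (fun r => (hρ r).1.le) (fun r s => Set.Ioo_subset_Icc_self (hP r s)) i j ξstar
  obtain ⟨hKLi, hKLj⟩ := sum_mul_klFun_geomMixture_eq_DeltaPlus (hθ i) (hθ j) hξ hmax
  have hetai : eta ρ P i (xstar ρ P i j ξstar) = DeltaPlus (theta ρ P i) (theta ρ P j) := by
    simpa only [eta_eq_sum_mul_klFun hρpos hρsum hP, hx] using hKLi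
  have hetaj : eta ρ P j (xstar ρ P i j ξstar) = DeltaPlus (theta ρ P i) (theta ρ P j) := by
    simpa only [eta_eq_sum_mul_klFun hρpos hρsum hP, hx] using hKLj
  have hnonneg : ∀ p, 0 ≤ xstar ρ P i j ξstar p := fun p =>
    hx p ▸ (mul_pos (rpow_pos_of_pos (hθ i p) _) (rpow_pos_of_pos (hθ j p) _)).le
  rw [ht0, one_div_one_div]
  exact ⟨hetai, hetaj, ⟨hnonneg, hetai.le⟩, ⟨hnonneg, hetaj.le⟩⟩

theorem stmt4 (k : ℕ) (hk : 1 ≤ k) (ρ : Fin k → ℝ)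
    (hρ : ∀ r, ρ r ∈ Set.Ioo (0 : ℝ) 1) (hρsum : ∑ r, ρ r = 1)
    (P : Matrix (Fin k) (Fin k) ℝ) (hPsymm : P.IsSymm)
    (hP : ∀ r s, P r s ∈ Set.Ioo (0 : ℝ) 1)
    (i j : Fin k) (hij : i ≠ j) (hPij : ∃ r, P r i ≠ P r j)
    (ξstar : ℝ) (hξ : ξstar ∈ Set.Ioo (0 : ℝ) 1)
    (hmax : ∀ ξ ∈ Set.Icc (0 : ℝ) 1,
      CH ξ (theta ρ P i) (theta ρ P j) ≤ CH ξstar (theta ρ P i) (theta ρ P j))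
    (t0 : ℝ) (ht0 : t0 = 1 / DeltaPlus (theta ρ P i) (theta ρ P j)) :
    eta ρ P i (xstar ρ P i j ξstar) = DeltaPlus (theta ρ P i) (theta ρ P j) ∧
    eta ρ P j (xstar ρ P i j ξstar) = DeltaPlus (theta ρ P i) (theta ρ P j) ∧
    xstar ρ P i j ξstar ∈ DR ρ P i (1 / t0) ∩ DR ρ P j (1 / t0) :=
  stmt4_general k ρ hρ hρsum P hP i j ξstar hξ hmax t0 ht0
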